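/- Let A be a Hopf algebra with extending datum Ω(A) = (H, ⊲, ⊳, f) forming a Hopf algebra extending structure, and let σ be a coquasitriangular structure on the unified product A ⋉ H. Define τ : H ⊗ H → k by τ(h, g) = σ(1 ⊗ h, 1 ⊗ g). Then τ(h₍₁₎, g₍₁₎) f(h₍₂₎, g₍₂₎) = f(g₍₁₎, h₍₁₎) τ(h₍₂₎, g₍₂₎) and τ(h₍₁₎, g₍₁₎) h₍₂₎ · g₍₂₎ = g₍₁₎ · h₍₁₎ τ(h₍₂₎, g₍₂₎) for all h, g ∈ H. -/

import Mathlib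

open TensorProduct Coalgebra LinearMap Finset HopfAlgebra

noncomputable section

variable {k : Type} [Field k]

/-- Representations of `comul a` with index type in `Type 0`. -/
structure Repr0 (k : Type) [CommSemiring k] {A : Type} [AddCommMonoid A] [Module k A]
    [CoalgebraStruct k A] (a : A) where
  {ι : Type}
  (index : Finset ι)
  (left : ι → A)
  (right : ι → A)
  (eq : ∑ i ∈ index, left i ⊗ₜ[k] right i = CoalgebraStruct.comul a)

/-- A skew pairing `λ : A ⊗ H → k` (given as a bilinear map), satisfying (BR1)–(BR4),
with Sweedler sums expressed via arbitrary representations of the comultiplication. -/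
structure IsSkewPairing {A H : Type} [Ring A] [Ring H]
    [Bialgebra k A] [Bialgebra k H] (lam : A →ₗ[k] H →ₗ[k] k) : Prop where
  br1 : ∀ (x y : A) (z : H) (rz : Repr0 k z),
    lam (x * y) z = ∑ i ∈ rz.index, lam x (rz.left i) * lam y (rz.right i)
  br2 : ∀ z : H, lam 1 z = counit (R := k) z
  br3 : ∀ (x : A) (l z : H) (rx : Repr0 k x),
    lam x (l * z) = ∑ i ∈ rx.index, lam (rx.left i) z * lam (rx.right i) l
  br4 : ∀ y : A, lam y 1 = counit (R := k) y

/-- A coquasitriangular (braided) structure on a bialgebra `H` : (BR1)–(BR5). -/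
structure IsCQT {H : Type} [Ring H] [Bialgebra k H]
    (p : H →ₗ[k] H →ₗ[k] k) extends IsSkewPairing p : Prop where
  br5 : ∀ (x y : H) (rx : Repr0 k x) (ry : Repr0 k y),
    ∑ i ∈ rx.index, ∑ j ∈ ry.index, p (rx.left i) (ry.left j) • (rx.right i * ry.right j)
    = ∑ i ∈ rx.index, ∑ j ∈ ry.index, p (rx.right i) (ry.right j) • (ry.left j * rx.left i)

/-- Coquasitriangularity (BR1)–(BR5) for a coalgebra `D` equipped with a (not necessarily
associative, not necessarily typeclass-registered) multiplication `mul` and unit `one`. -/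
structure IsCQTMul {D : Type} [AddCommGroup D] [Module k D] [Coalgebra k D]
    (mul : D →ₗ[k] D →ₗ[k] D) (one : D) (σ : D →ₗ[k] D →ₗ[k] k) : Prop where
  br1 : ∀ (x y z : D) (rz : Repr0 k z),
    σ (mul x y) z = ∑ i ∈ rz.index, σ x (rz.left i) * σ y (rz.right i)
  br2 : ∀ z : D, σ one z = counit (R := k) z
  br3 : ∀ (x l z : D) (rx : Repr0 k x),
    σ x (mul l z) = ∑ i ∈ rx.index, σ (rx.left i) z * σ (rx.right i) l
  br4 : ∀ y : D, σ y one = counit (R := k) y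
  br5 : ∀ (x y : D) (rx : Repr0 k x) (ry : Repr0 k y),
    ∑ i ∈ rx.index, ∑ j ∈ ry.index, σ (rx.left i) (ry.left j) • mul (rx.right i) (ry.right j)
    = ∑ i ∈ rx.index, ∑ j ∈ ry.index, σ (rx.right i) (ry.right j) • mul (ry.left j) (rx.left i)

/-- A matched pair of bialgebras `(A, H, ⊳, ⊲)` : `lact = ⊳ : H ⊗ A → A` is a left
`H`-module coalgebra structure, `ract = ⊲ : H ⊗ A → H` is a right `A`-module coalgebra
structure, together with the matched pair compatibility conditions. -/
structure IsMatchedPair {A H : Type} [Ring A] [Ring H] [Bialgebra k A] [Bialgebra k H]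
    (lact : H →ₗ[k] A →ₗ[k] A) (ract : H →ₗ[k] A →ₗ[k] H) : Prop where
  ract_unit : ∀ h : H, ract h 1 = h
  ract_act : ∀ (h : H) (a b : A), ract h (a * b) = ract (ract h a) b
  ract_comul : ∀ (h : H) (a : A) (rh : Repr0 k h) (ra : Repr0 k a),
    comul (R := k) (ract h a)
      = ∑ i ∈ rh.index, ∑ j ∈ ra.index,
          ract (rh.left i) (ra.left j) ⊗ₜ[k] ract (rh.right i) (ra.right j)
  ract_counit : ∀ (h : H) (a : A),
    counit (R := k) (ract h a) = counit (R := k) h * counit (R := k) a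
  lact_unit : ∀ a : A, lact 1 a = a
  lact_act : ∀ (g h : H) (a : A), lact (g * h) a = lact g (lact h a)
  lact_comul : ∀ (h : H) (a : A) (rh : Repr0 k h) (ra : Repr0 k a),
    comul (R := k) (lact h a)
      = ∑ i ∈ rh.index, ∑ j ∈ ra.index,
          lact (rh.left i) (ra.left j) ⊗ₜ[k] lact (rh.right i) (ra.right j)
  lact_counit : ∀ (h : H) (a : A),
    counit (R := k) (lact h a) = counit (R := k) h * counit (R := k) a
  lact_mul : ∀ (h : H) (a b : A) (rh : Repr0 k h) (ra : Repr0 k a),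
    lact h (a * b) = ∑ i ∈ rh.index, ∑ j ∈ ra.index,
      lact (rh.left i) (ra.left j) * lact (ract (rh.right i) (ra.right j)) b
  mul_ract : ∀ (g h : H) (a : A) (rh : Repr0 k h) (ra : Repr0 k a),
    ract (g * h) a = ∑ i ∈ rh.index, ∑ j ∈ ra.index,
      ract g (lact (rh.left i) (ra.left j)) * ract (rh.right i) (ra.right j)
  lact_one : ∀ h : H, lact h 1 = counit (R := k) h • (1 : A)
  one_ract : ∀ a : A, ract 1 a = counit (R := k) a • (1 : H)
  sym : ∀ (h : H) (a : A) (rh : Repr0 k h) (ra : Repr0 k a),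
    ∑ i ∈ rh.index, ∑ j ∈ ra.index,
        ract (rh.left i) (ra.left j) ⊗ₜ[k] lact (rh.right i) (ra.right j)
    = ∑ i ∈ rh.index, ∑ j ∈ ra.index,
        ract (rh.right i) (ra.right j) ⊗ₜ[k] lact (rh.left i) (ra.left j)

/-- `mulD` is the double cross product multiplication
`(a ⊗ h)(b ⊗ g) = a(h₍₁₎ ⊳ b₍₁₎) ⊗ (h₍₂₎ ⊲ b₍₂₎)g` on `A ⊗ H`. -/
def IsDCPMul {A H : Type} [Ring A] [Ring H] [Bialgebra k A] [Bialgebra k H]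
    (lact : H →ₗ[k] A →ₗ[k] A) (ract : H →ₗ[k] A →ₗ[k] H)
    (mulD : A ⊗[k] H →ₗ[k] A ⊗[k] H →ₗ[k] A ⊗[k] H) : Prop :=
  ∀ (a b : A) (h g : H) (rh : Repr0 k h) (rb : Repr0 k b),
    mulD (a ⊗ₜ[k] h) (b ⊗ₜ[k] g) = ∑ i ∈ rh.index, ∑ j ∈ rb.index,
      (a * lact (rh.left i) (rb.left j)) ⊗ₜ[k] (ract (rh.right i) (rb.right j) * g)

/-- The right action `h ⊲ a = h₍₂₎ λ⁻¹(h₍₁₎, a₍₁₎) λ(h₍₃₎, a₍₂₎)` induced by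
a skew pairing `λ : H ⊗ A → k` (where `λ⁻¹ = λ ∘ (S_H ⊗ id)`). -/
def IsQDRact {A H : Type} [Ring A] [Ring H] [HopfAlgebra k A] [HopfAlgebra k H]
    (lam : H →ₗ[k] A →ₗ[k] k) (ract : H →ₗ[k] A →ₗ[k] H) : Prop :=
  ∀ (h : H) (a : A) (rh : Repr0 k h)
    (rh1 : ∀ i : rh.ι, Repr0 k (rh.left i)) (ra : Repr0 k a),
    ract h a = ∑ i ∈ rh.index, ∑ j ∈ (rh1 i).index, ∑ l ∈ ra.index,
      (lam (antipode (R := k) ((rh1 i).left j)) (ra.left l) * lam (rh.right i) (ra.right l))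
        • (rh1 i).right j

/-- The left action `h ⊳ a = a₍₂₎ λ⁻¹(h₍₁₎, a₍₁₎) λ(h₍₂₎, a₍₃₎)` induced by
a skew pairing `λ : H ⊗ A → k`. -/
def IsQDLact {A H : Type} [Ring A] [Ring H] [HopfAlgebra k A] [HopfAlgebra k H]
    (lam : H →ₗ[k] A →ₗ[k] k) (lact : H →ₗ[k] A →ₗ[k] A) : Prop :=
  ∀ (h : H) (a : A) (rh : Repr0 k h) (ra : Repr0 k a)
    (ra1 : ∀ l : ra.ι, Repr0 k (ra.left l)),
    lact h a = ∑ i ∈ rh.index, ∑ l ∈ ra.index, ∑ j ∈ (ra1 l).index,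
      (lam (antipode (R := k) (rh.left i)) ((ra1 l).left j) * lam (rh.right i) (ra.right l))
        • (ra1 l).right j

/-- `σ(a ⊗ h, b ⊗ g) = u(a₍₁₎, g₍₁₎) p(a₍₂₎, b₍₁₎) τ(h₍₁₎, g₍₂₎) v(h₍₂₎, b₍₂₎)`. -/
def IsSigma {A H : Type} [Ring A] [Ring H] [Bialgebra k A] [Bialgebra k H]
    (u : A →ₗ[k] H →ₗ[k] k) (p : A →ₗ[k] A →ₗ[k] k)
    (τ : H →ₗ[k] H →ₗ[k] k) (v : H →ₗ[k] A →ₗ[k] k)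
    (σ : A ⊗[k] H →ₗ[k] A ⊗[k] H →ₗ[k] k) : Prop :=
  ∀ (a b : A) (h g : H) (ra : Repr0 k a) (rb : Repr0 k b)
    (rh : Repr0 k h) (rg : Repr0 k g),
    σ (a ⊗ₜ[k] h) (b ⊗ₜ[k] g) = ∑ m ∈ ra.index, ∑ n ∈ rb.index, ∑ i ∈ rh.index, ∑ j ∈ rg.index,
      u (ra.left m) (rg.left j) * p (ra.right m) (rb.left n)
        * τ (rh.left i) (rg.right j) * v (rh.right i) (rb.right n)


section UnifiedProduct

variable {A H : Type} [Ring A] [Bialgebra k A]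
  [AddCommGroup H] [Module k H] [Coalgebra k H]

/-- A (bialgebra) extending structure `Ω(A) = (H, ⊲, ⊳, f)` of the bialgebra `A`:
`H` is a coalgebra with a unitary (not necessarily associative) multiplication `mulH`
and unit `oneH`; `⊳ = lact`, `⊲ = ract`, `f` are coalgebra maps satisfying the
normalization conditions, `Δ_H`, `ε_H` are multiplicative, `(H, ⊲)` is a right
`A`-module, and the axioms (BE1)–(BE7) hold. -/
structure IsExtendingStructure (oneH : H) (mulH : H →ₗ[k] H →ₗ[k] H)
    (lact : H →ₗ[k] A →ₗ[k] A) (ract : H →ₗ[k] A →ₗ[k] H)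
    (f : H →ₗ[k] H →ₗ[k] A) : Prop where
  lact_comul : ∀ (h : H) (a : A) (rh : Repr0 k h) (ra : Repr0 k a),
    comul (R := k) (lact h a) = ∑ i ∈ rh.index, ∑ j ∈ ra.index,
      lact (rh.left i) (ra.left j) ⊗ₜ[k] lact (rh.right i) (ra.right j)
  lact_counit : ∀ (h : H) (a : A),
    counit (R := k) (lact h a) = counit (R := k) h * counit (R := k) a
  ract_comul : ∀ (h : H) (a : A) (rh : Repr0 k h) (ra : Repr0 k a),
    comul (R := k) (ract h a) = ∑ i ∈ rh.index, ∑ j ∈ ra.index,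
      ract (rh.left i) (ra.left j) ⊗ₜ[k] ract (rh.right i) (ra.right j)
  ract_counit : ∀ (h : H) (a : A),
    counit (R := k) (ract h a) = counit (R := k) h * counit (R := k) a
  f_comul : ∀ (g h : H) (rg : Repr0 k g) (rh : Repr0 k h),
    comul (R := k) (f g h) = ∑ i ∈ rg.index, ∑ j ∈ rh.index,
      f (rg.left i) (rh.left j) ⊗ₜ[k] f (rg.right i) (rh.right j)
  f_counit : ∀ g h : H, counit (R := k) (f g h) = counit (R := k) g * counit (R := k) h
  -- normalization conditions
  lact_one : ∀ h : H, lact h 1 = counit (R := k) h • (1 : A)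
  one_lact : ∀ a : A, lact oneH a = a
  one_ract : ∀ a : A, ract oneH a = counit (R := k) a • oneH
  ract_one : ∀ h : H, ract h 1 = h
  comul_oneH : comul (R := k) oneH = oneH ⊗ₜ[k] oneH
  counit_oneH : counit (R := k) oneH = 1
  f_oneH_right : ∀ h : H, f h oneH = counit (R := k) h • (1 : A)
  f_oneH_left : ∀ h : H, f oneH h = counit (R := k) h • (1 : A)
  -- `(H, oneH, mulH)` is unitary
  oneH_mul : ∀ h : H, mulH oneH h = h
  mul_oneH : ∀ h : H, mulH h oneH = h
  -- `Δ_H` and `ε_H` are multiplicative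
  comul_mul : ∀ (g h : H) (rg : Repr0 k g) (rh : Repr0 k h),
    comul (R := k) (mulH g h) = ∑ i ∈ rg.index, ∑ j ∈ rh.index,
      mulH (rg.left i) (rh.left j) ⊗ₜ[k] mulH (rg.right i) (rh.right j)
  counit_mul : ∀ g h : H, counit (R := k) (mulH g h) = counit (R := k) g * counit (R := k) h
  -- `(H, ⊲)` is a right `A`-module
  ract_ract : ∀ (h : H) (a b : A), ract h (a * b) = ract (ract h a) b
  -- (BE1)–(BE7)
  be1 : ∀ (g h l : H) (rh : Repr0 k h) (rl : Repr0 k l),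
    mulH (mulH g h) l = ∑ i ∈ rh.index, ∑ j ∈ rl.index,
      mulH (ract g (f (rh.left i) (rl.left j))) (mulH (rh.right i) (rl.right j))
  be2 : ∀ (g : H) (a b : A) (rg : Repr0 k g) (ra : Repr0 k a),
    lact g (a * b) = ∑ i ∈ rg.index, ∑ j ∈ ra.index,
      lact (rg.left i) (ra.left j) * lact (ract (rg.right i) (ra.right j)) b
  be3 : ∀ (g h : H) (a : A) (rh : Repr0 k h) (ra : Repr0 k a),
    ract (mulH g h) a = ∑ i ∈ rh.index, ∑ j ∈ ra.index,
      mulH (ract g (lact (rh.left i) (ra.left j))) (ract (rh.right i) (ra.right j))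
  be4 : ∀ (g h : H) (a : A) (rg : Repr0 k g) (rh : Repr0 k h)
      (rh1 : ∀ j : rh.ι, Repr0 k (rh.left j)) (ra : Repr0 k a)
      (ra1 : ∀ l : ra.ι, Repr0 k (ra.left l)),
    ∑ i ∈ rg.index, ∑ j ∈ rh.index, ∑ j' ∈ (rh1 j).index, ∑ l ∈ ra.index, ∑ l' ∈ (ra1 l).index,
      lact (rg.left i) (lact ((rh1 j).left j') ((ra1 l).left l'))
        * f (ract (rg.right i) (lact ((rh1 j).right j') ((ra1 l).right l')))
            (ract (rh.right j) (ra.right l))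
    = ∑ i ∈ rg.index, ∑ j ∈ rh.index,
        f (rg.left i) (rh.left j) * lact (mulH (rg.right i) (rh.right j)) a
  be5 : ∀ (g h t : H) (rg : Repr0 k g) (rh : Repr0 k h)
      (rh1 : ∀ j : rh.ι, Repr0 k (rh.left j)) (rt : Repr0 k t)
      (rt1 : ∀ m : rt.ι, Repr0 k (rt.left m)),
    ∑ i ∈ rg.index, ∑ j ∈ rh.index, ∑ j' ∈ (rh1 j).index, ∑ m ∈ rt.index, ∑ m' ∈ (rt1 m).index,
      lact (rg.left i) (f ((rh1 j).left j') ((rt1 m).left m'))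
        * f (ract (rg.right i) (f ((rh1 j).right j') ((rt1 m).right m')))
            (mulH (rh.right j) (rt.right m))
    = ∑ i ∈ rg.index, ∑ j ∈ rh.index,
        f (rg.left i) (rh.left j) * f (mulH (rg.right i) (rh.right j)) t
  be6 : ∀ (g : H) (a : A) (rg : Repr0 k g) (ra : Repr0 k a),
    ∑ i ∈ rg.index, ∑ j ∈ ra.index,
        ract (rg.left i) (ra.left j) ⊗ₜ[k] lact (rg.right i) (ra.right j)
    = ∑ i ∈ rg.index, ∑ j ∈ ra.index,
        ract (rg.right i) (ra.right j) ⊗ₜ[k] lact (rg.left i) (ra.left j)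
  be7 : ∀ (g h : H) (rg : Repr0 k g) (rh : Repr0 k h),
    ∑ i ∈ rg.index, ∑ j ∈ rh.index,
        mulH (rg.left i) (rh.left j) ⊗ₜ[k] f (rg.right i) (rh.right j)
    = ∑ i ∈ rg.index, ∑ j ∈ rh.index,
        mulH (rg.right i) (rh.right j) ⊗ₜ[k] f (rg.left i) (rh.left j)

/-- `mulU` is the unified product multiplication
`(a ⊗ h)(c ⊗ g) = a(h₍₁₎ ⊳ c₍₁₎) f(h₍₂₎ ⊲ c₍₂₎, g₍₁₎) ⊗ (h₍₃₎ ⊲ c₍₃₎) · g₍₂₎`. -/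
def IsUMul (mulH : H →ₗ[k] H →ₗ[k] H) (lact : H →ₗ[k] A →ₗ[k] A)
    (ract : H →ₗ[k] A →ₗ[k] H) (f : H →ₗ[k] H →ₗ[k] A)
    (mulU : A ⊗[k] H →ₗ[k] A ⊗[k] H →ₗ[k] A ⊗[k] H) : Prop :=
  ∀ (a c : A) (h g : H) (rh : Repr0 k h) (rh1 : ∀ i : rh.ι, Repr0 k (rh.left i))
    (rc : Repr0 k c) (rc1 : ∀ j : rc.ι, Repr0 k (rc.left j)) (rg : Repr0 k g),
    mulU (a ⊗ₜ[k] h) (c ⊗ₜ[k] g)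
      = ∑ i ∈ rh.index, ∑ i' ∈ (rh1 i).index, ∑ j ∈ rc.index, ∑ j' ∈ (rc1 j).index,
          ∑ m ∈ rg.index,
        (a * lact ((rh1 i).left i') ((rc1 j).left j')
            * f (ract ((rh1 i).right i') ((rc1 j).right j')) (rg.left m))
          ⊗ₜ[k] mulH (ract (rh.right i) (rc.right j)) (rg.right m)

/-- `S` is an antipode for the coalgebra `D` with multiplication `mul` and unit `one`. -/
def IsAntipodeFor {D : Type} [AddCommGroup D] [Module k D] [Coalgebra k D]
    (mul : D →ₗ[k] D →ₗ[k] D) (one : D) (S : D →ₗ[k] D) : Prop :=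
  ∀ (w : D) (rw : Repr0 k w),
    (∑ i ∈ rw.index, mul (S (rw.left i)) (rw.right i) = counit (R := k) w • one) ∧
    (∑ i ∈ rw.index, mul (rw.left i) (S (rw.right i)) = counit (R := k) w • one)

end UnifiedProduct

/-! Apply (BR5) to `1 ⊗ h` and `1 ⊗ g`. By the normalization conditions
`(1 ⊗ h)(1 ⊗ g) = f(h₍₁₎, g₍₁₎) ⊗ h₍₂₎ · g₍₂₎`, so applying `id ⊗ ε` and `ε ⊗ id` to both sides
of (BR5), and using that `ε` is multiplicative for `f` and for `·`, gives the two identities. -/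

namespace Repr0

variable {R C : Type} [CommSemiring R] [AddCommMonoid C] [Module R C] [Coalgebra R C]

def toRepr {c : C} (r : Repr0 R c) : Coalgebra.Repr R c r.ι :=
  ⟨r.index, r.left, r.right, r.eq⟩

variable (R) in
def arbitrary (c : C) : Repr0 R c :=
  ⟨(ℛ R c).index, (ℛ R c).left, (ℛ R c).right, (ℛ R c).eq⟩

lemma sum_counit_smul {c : C} (r : Repr0 R c) :
    ∑ i ∈ r.index, counit (R := R) (r.left i) • r.right i = c :=
  Coalgebra.sum_counit_smul r.toRepr

lemma sum_smul_counit {c : C} (r : Repr0 R c) :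
    ∑ i ∈ r.index, counit (R := R) (r.right i) • r.left i = c := by
  have h := congrArg (TensorProduct.rid R C) (Coalgebra.sum_tmul_counit_eq r.toRepr)
  simp only [map_sum, TensorProduct.rid_tmul, one_smul] at h
  exact h

variable {D Z : Type} [AddCommMonoid D] [Module R D] [Coalgebra R D]
  [AddCommMonoid Z] [Module R Z]

lemma sum_sum_counit_smul_apply₂ (B : C →ₗ[R] D →ₗ[R] Z) {c : C} {d : D}
    (rc : Repr0 R c) (rd : Repr0 R d) :
    ∑ i ∈ rc.index, ∑ j ∈ rd.index,
      (counit (R := R) (rc.left i) * counit (R := R) (rd.left j))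
        • B (rc.right i) (rd.right j) = B c d := by
  calc _ = ∑ i ∈ rc.index, counit (R := R) (rc.left i) • B.flip d (rc.right i) := by
        refine Finset.sum_congr rfl fun i _ => ?_
        conv_rhs => rw [LinearMap.flip_apply, ← rd.sum_counit_smul]
        simp only [map_sum, map_smul, Finset.smul_sum, mul_smul]
    _ = B c d := by
        conv_rhs => rw [← LinearMap.flip_apply, ← rc.sum_counit_smul]
        simp only [map_sum, map_smul]

lemma sum_sum_apply₂_smul_counit (B : C →ₗ[R] D →ₗ[R] Z) {c : C} {d : D}
    (rc : Repr0 R c) (rd : Repr0 R d) :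
    ∑ i ∈ rc.index, ∑ j ∈ rd.index,
      (counit (R := R) (rc.right i) * counit (R := R) (rd.right j))
        • B (rc.left i) (rd.left j) = B c d := by
  calc _ = ∑ i ∈ rc.index, counit (R := R) (rc.right i) • B.flip d (rc.left i) := by
        refine Finset.sum_congr rfl fun i _ => ?_
        conv_rhs => rw [LinearMap.flip_apply, ← rd.sum_smul_counit]
        simp only [map_sum, map_smul, Finset.smul_sum, mul_smul]
    _ = B c d := by
        conv_rhs => rw [← LinearMap.flip_apply, ← rc.sum_smul_counit]
        simp only [map_sum, map_smul]

variable {A H : Type} [Semiring A] [Bialgebra R A] [AddCommMonoid H] [Module R H] [Coalgebra R H]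

def one : Repr0 R (1 : A) :=
  ⟨({()} : Finset Unit), fun _ => 1, fun _ => 1, by simp [Algebra.TensorProduct.one_def]⟩

def oneTmul {h : H} (rh : Repr0 R h) : Repr0 R ((1 : A) ⊗ₜ[R] h) where
  index := rh.index
  left i := (1 : A) ⊗ₜ[R] rh.left i
  right i := (1 : A) ⊗ₜ[R] rh.right i
  eq := by
    change _ = TensorProduct.tensorTensorTensorComm R A A H H
      (CoalgebraStruct.comul (1 : A) ⊗ₜ[R] CoalgebraStruct.comul h)
    rw [Bialgebra.comul_one, Algebra.TensorProduct.one_def, ← rh.eq, tmul_sum, map_sum]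
    simp only [TensorProduct.tensorTensorTensorComm_tmul]

end Repr0

section UnifiedProductMul

variable {A H : Type} [Ring A] [Bialgebra k A] [AddCommGroup H] [Module k H] [Coalgebra k H]
  {mulH : H →ₗ[k] H →ₗ[k] H} {lact : H →ₗ[k] A →ₗ[k] A} {ract : H →ₗ[k] A →ₗ[k] H}
  {f : H →ₗ[k] H →ₗ[k] A} {mulU : A ⊗[k] H →ₗ[k] A ⊗[k] H →ₗ[k] A ⊗[k] H}

lemma IsUMul.one_tmul_mul_one_tmul (hmulU : IsUMul mulH lact ract f mulU)
    (lact_one : ∀ h : H, lact h 1 = counit (R := k) h • (1 : A))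
    (ract_one : ∀ h : H, ract h 1 = h) {h g : H} (rh : Repr0 k h) (rg : Repr0 k g) :
    mulU ((1 : A) ⊗ₜ[k] h) ((1 : A) ⊗ₜ[k] g)
      = ∑ i ∈ rh.index, ∑ j ∈ rg.index,
          f (rh.left i) (rg.left j) ⊗ₜ[k] mulH (rh.right i) (rg.right j) := by
  rw [hmulU 1 1 h g rh (fun i => Repr0.arbitrary k (rh.left i)) Repr0.one (fun _ => Repr0.one) rg]
  simp only [Repr0.one, Finset.sum_singleton, lact_one, ract_one, one_mul, smul_mul_assoc]
  refine Finset.sum_congr rfl fun i _ => ?_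
  rw [Finset.sum_comm]
  refine Finset.sum_congr rfl fun j _ => ?_
  rw [← TensorProduct.sum_tmul]
  congr 1
  simpa only [map_sum, map_smul, LinearMap.flip_apply] using
    congrArg (f.flip (rg.left j)) (Repr0.arbitrary k (rh.left i)).sum_counit_smul

lemma IsUMul.rid_counit_one_tmul_mul (hmulU : IsUMul mulH lact ract f mulU)
    (lact_one : ∀ h : H, lact h 1 = counit (R := k) h • (1 : A))
    (ract_one : ∀ h : H, ract h 1 = h)
    (counit_mul : ∀ g h : H, counit (R := k) (mulH g h) = counit (R := k) g * counit (R := k) h)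
    (h g : H) :
    TensorProduct.rid k A (LinearMap.lTensor A (counit (R := k))
      (mulU ((1 : A) ⊗ₜ[k] h) ((1 : A) ⊗ₜ[k] g))) = f h g := by
  rw [hmulU.one_tmul_mul_one_tmul lact_one ract_one (Repr0.arbitrary k h) (Repr0.arbitrary k g)]
  simp only [map_sum, LinearMap.lTensor_tmul, TensorProduct.rid_tmul, counit_mul]
  exact Repr0.sum_sum_apply₂_smul_counit f _ _

lemma IsUMul.lid_counit_one_tmul_mul (hmulU : IsUMul mulH lact ract f mulU)
    (lact_one : ∀ h : H, lact h 1 = counit (R := k) h • (1 : A))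
    (ract_one : ∀ h : H, ract h 1 = h)
    (f_counit : ∀ g h : H, counit (R := k) (f g h) = counit (R := k) g * counit (R := k) h)
    (h g : H) :
    TensorProduct.lid k H (LinearMap.rTensor H (counit (R := k))
      (mulU ((1 : A) ⊗ₜ[k] h) ((1 : A) ⊗ₜ[k] g))) = mulH h g := by
  rw [hmulU.one_tmul_mul_one_tmul lact_one ract_one (Repr0.arbitrary k h) (Repr0.arbitrary k g)]
  simp only [map_sum, LinearMap.rTensor_tmul, TensorProduct.lid_tmul, f_counit]
  exact Repr0.sum_sum_counit_smul_apply₂ mulH _ _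

end UnifiedProductMul

theorem unified_product_tau_symmetry_general {k A H : Type} [Field k] [Ring A] [HopfAlgebra k A]
    [AddCommGroup H] [Module k H] [Coalgebra k H]
    (oneH : H) (mulH : H →ₗ[k] H →ₗ[k] H)
    (lact : H →ₗ[k] A →ₗ[k] A) (ract : H →ₗ[k] A →ₗ[k] H) (f : H →ₗ[k] H →ₗ[k] A)
    (hext : IsExtendingStructure oneH mulH lact ract f)
    (mulU : A ⊗[k] H →ₗ[k] A ⊗[k] H →ₗ[k] A ⊗[k] H)
    (hmulU : IsUMul mulH lact ract f mulU)
    (σ : A ⊗[k] H →ₗ[k] A ⊗[k] H →ₗ[k] k)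
    (hσ : IsCQTMul mulU ((1 : A) ⊗ₜ[k] oneH) σ)
    (τ : H →ₗ[k] H →ₗ[k] k)
    (hτ : ∀ h g : H, τ h g = σ ((1 : A) ⊗ₜ[k] h) ((1 : A) ⊗ₜ[k] g)) :
    ∀ (h g : H) (rh : Repr0 k h) (rg : Repr0 k g),
      (∑ i ∈ rh.index, ∑ j ∈ rg.index,
          τ (rh.left i) (rg.left j) • f (rh.right i) (rg.right j)
        = ∑ i ∈ rh.index, ∑ j ∈ rg.index,
            τ (rh.right i) (rg.right j) • f (rg.left j) (rh.left i)) ∧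
      (∑ i ∈ rh.index, ∑ j ∈ rg.index,
          τ (rh.left i) (rg.left j) • mulH (rh.right i) (rg.right j)
        = ∑ i ∈ rh.index, ∑ j ∈ rg.index,
            τ (rh.right i) (rg.right j) • mulH (rg.left j) (rh.left i)) := by
  intro h g rh rg
  have braiding := hσ.br5 _ _ (rh.oneTmul (A := A)) (rg.oneTmul (A := A))
  simp only [Repr0.oneTmul, ← hτ] at braiding
  constructor
  · simpa only [map_sum, map_smul,
      hmulU.rid_counit_one_tmul_mul hext.lact_one hext.ract_one hext.counit_mul] using
      congrArg (fun x => TensorProduct.rid k A (LinearMap.lTensor A (counit (R := k)) x)) braiding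
  · simpa only [map_sum, map_smul,
      hmulU.lid_counit_one_tmul_mul hext.lact_one hext.ract_one hext.f_counit] using
      congrArg (fun x => TensorProduct.lid k H (LinearMap.rTensor H (counit (R := k)) x)) braiding

/-- for a coquasitriangular structure `σ` on a unified product `A ⋉ H`,
the map `τ(h, g) = σ(1 ⊗ h, 1 ⊗ g)` satisfies
`τ(h₍₁₎, g₍₁₎) f(h₍₂₎, g₍₂₎) = f(g₍₁₎, h₍₁₎) τ(h₍₂₎, g₍₂₎)` and
`τ(h₍₁₎, g₍₁₎) h₍₂₎ · g₍₂₎ = g₍₁₎ · h₍₁₎ τ(h₍₂₎, g₍₂₎)`. -/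
theorem unified_product_tau_symmetry {k A H : Type} [Field k] [Ring A] [HopfAlgebra k A]
    [AddCommGroup H] [Module k H] [Coalgebra k H]
    (oneH : H) (mulH : H →ₗ[k] H →ₗ[k] H)
    (lact : H →ₗ[k] A →ₗ[k] A) (ract : H →ₗ[k] A →ₗ[k] H) (f : H →ₗ[k] H →ₗ[k] A)
    (hext : IsExtendingStructure oneH mulH lact ract f)
    (mulU : A ⊗[k] H →ₗ[k] A ⊗[k] H →ₗ[k] A ⊗[k] H)
    (hmulU : IsUMul mulH lact ract f mulU)
    -- Hopf algebra extending structure: `A ⋉ H` has an antipode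
    (Santi : A ⊗[k] H →ₗ[k] A ⊗[k] H)
    (hS : IsAntipodeFor mulU ((1 : A) ⊗ₜ[k] oneH) Santi)
    (σ : A ⊗[k] H →ₗ[k] A ⊗[k] H →ₗ[k] k)
    (hσ : IsCQTMul mulU ((1 : A) ⊗ₜ[k] oneH) σ)
    (τ : H →ₗ[k] H →ₗ[k] k)
    (hτ : ∀ h g : H, τ h g = σ ((1 : A) ⊗ₜ[k] h) ((1 : A) ⊗ₜ[k] g)) :
    ∀ (h g : H) (rh : Repr0 k h) (rg : Repr0 k g),
      (∑ i ∈ rh.index, ∑ j ∈ rg.index,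
          τ (rh.left i) (rg.left j) • f (rh.right i) (rg.right j)
        = ∑ i ∈ rh.index, ∑ j ∈ rg.index,
            τ (rh.right i) (rg.right j) • f (rg.left j) (rh.left i)) ∧
      (∑ i ∈ rh.index, ∑ j ∈ rg.index,
          τ (rh.left i) (rg.left j) • mulH (rh.right i) (rg.right j)
        = ∑ i ∈ rh.index, ∑ j ∈ rg.index,
            τ (rh.right i) (rg.right j) • mulH (rg.left j) (rh.left i)) :=
  unified_product_tau_symmetry_general oneH mulH lact ract f hext mulU hmulU σ hσ τ hτ

end
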